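/- arXiv:2402.08547 — 2 statements merged into one kernel-verified Lean document; each statement's English description precedes it below -/
import Mathlib

section
/- Let f : [0,1] → [0,1] be continuous and increasing with f(0) = 0 and f(1) = 1. Suppose n ≥ 1 is an integer and ε > 0 is such that |f(x) − f(y)| ≤ ε for all x, y ∈ [0,1] with |x − y| ≤ 1/n. Then there exists V ∈ W_n such that |f(x) − V(x)| ≤ ε + 2/n for all x ∈ [0,1]. -/
/-!
Round the values of `f` at the grid points `j / n` down to multiples of `1 / n` and interpolate
linearly. On a grid cell `[j / n, (j + 1) / n]` both `f` and the interpolant lie between the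
rounded value at `j / n` and `f ((j + 1) / n)`; these differ by at most the oscillation `ε` of `f`
over the cell plus the rounding error `1 / n`.
-/

/-- `Wn n` is the set of cumulative valuation functions `V : [0,1] → [0,1]` (encoded as
functions `ℝ → ℝ` with the relevant conditions on `[0,1]`) that are nondecreasing, satisfy
`V(0) = 0`, `V(1) = 1`, take values in `{0, 1/n, …, 1}` at the grid points `i/n`, and are
affine on each grid interval `[i/n, (i+1)/n]`. -/
def Wn (n : ℕ) : Set (ℝ → ℝ) :=
  { V | (∀ x ∈ Set.Icc (0:ℝ) 1, V x ∈ Set.Icc (0:ℝ) 1) ∧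
        MonotoneOn V (Set.Icc (0:ℝ) 1) ∧
        V 0 = 0 ∧ V 1 = 1 ∧
        (∀ i : ℕ, i ≤ n → ∃ k : ℕ, V ((i : ℝ) / n) = (k : ℝ) / n) ∧
        (∀ i : ℕ, i < n → ∀ x : ℝ, (i : ℝ) / n ≤ x → x ≤ ((i : ℝ) + 1) / n →
          V x = V ((i : ℝ) / n) +
            (n : ℝ) * (x - (i : ℝ) / n) * (V (((i : ℝ) + 1) / n) - V ((i : ℝ) / n))) }

open Set

noncomputable def gridFloor (n : ℕ) (y : ℝ) : ℝ := ⌊n * y⌋₊ / n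

/-- The grid point `j / n`, clamped to `1` so that the rounded values are monotone in `j ∈ ℕ`. -/
noncomputable def gridPoint (n j : ℕ) : ℝ := (min j n : ℕ) / n

noncomputable def gridInterp (n : ℕ) (a : ℕ → ℝ) (x : ℝ) : ℝ :=
  a ⌊n * x⌋₊ + (n * x - ⌊n * x⌋₊) * (a (⌊n * x⌋₊ + 1) - a ⌊n * x⌋₊)

section gridFloor

variable {n : ℕ} {y : ℝ}

theorem gridFloor_le (hy : 0 ≤ y) : gridFloor n y ≤ y := by
  rcases n.eq_zero_or_pos with rfl | hn
  · simpa [gridFloor] using hy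
  · rw [gridFloor, div_le_iff₀ (by exact_mod_cast hn), mul_comm]
    exact Nat.floor_le (by positivity)

theorem sub_inv_lt_gridFloor (hn : 0 < n) (y : ℝ) : y - 1 / n < gridFloor n y := by
  have hn' : (0 : ℝ) < n := by exact_mod_cast hn
  rw [gridFloor, sub_lt_iff_lt_add, ← add_div, lt_div_iff₀ hn', mul_comm]
  exact Nat.lt_floor_add_one _

theorem gridFloor_nonneg (n : ℕ) (y : ℝ) : 0 ≤ gridFloor n y := by
  unfold gridFloor; positivity

theorem gridFloor_mono (n : ℕ) : Monotone (gridFloor n) := fun _ _ h =>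
  div_le_div_of_nonneg_right
    (Nat.cast_le.2 (Nat.floor_mono (mul_le_mul_of_nonneg_left h n.cast_nonneg))) n.cast_nonneg

theorem gridFloor_zero (n : ℕ) : gridFloor n 0 = 0 := by simp [gridFloor]

theorem gridFloor_one (hn : n ≠ 0) : gridFloor n 1 = 1 := by
  simp [gridFloor, hn]

end gridFloor

section gridPoint

variable {n : ℕ} {x : ℝ}

theorem gridPoint_mem_Icc (n j : ℕ) : gridPoint n j ∈ Icc (0 : ℝ) 1 :=
  ⟨by unfold gridPoint; positivity,
    div_le_one_of_le₀ (Nat.cast_le.2 (min_le_right j n)) n.cast_nonneg⟩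

theorem gridPoint_mono (n : ℕ) : Monotone (gridPoint n) := fun _ _ h =>
  div_le_div_of_nonneg_right (Nat.cast_le.2 (min_le_min_right n h)) n.cast_nonneg

theorem gridPoint_of_le {j : ℕ} (h : j ≤ n) : gridPoint n j = j / n := by
  rw [gridPoint, min_eq_left h]

theorem gridPoint_succ_sub_le (n j : ℕ) : gridPoint n (j + 1) - gridPoint n j ≤ 1 / n := by
  rw [gridPoint, gridPoint, ← sub_div]
  gcongr
  have h : min (j + 1) n ≤ min j n + 1 := by omega
  rw [sub_le_iff_le_add']
  exact_mod_cast h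

theorem gridPoint_floor_le (hx : 0 ≤ x) : gridPoint n ⌊n * x⌋₊ ≤ x := by
  rcases n.eq_zero_or_pos with rfl | hn
  · simpa [gridPoint] using hx
  · rw [gridPoint, div_le_iff₀ (by exact_mod_cast hn), mul_comm]
    exact (Nat.cast_le.2 (min_le_left _ _)).trans (Nat.floor_le (by positivity))

theorem le_gridPoint_floor_succ (hn : 0 < n) (hx : x ≤ 1) : x ≤ gridPoint n (⌊n * x⌋₊ + 1) := by
  have hn' : (0 : ℝ) < n := by exact_mod_cast hn
  rw [gridPoint, le_div_iff₀ hn', mul_comm]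
  rcases min_choice (⌊n * x⌋₊ + 1) n with h | h <;> rw [h]
  · exact_mod_cast (Nat.lt_floor_add_one _).le
  · nlinarith

end gridPoint

section gridInterp

variable {n : ℕ} {a : ℕ → ℝ} {x : ℝ}

theorem gridInterp_natCast_div (hn : n ≠ 0) (a : ℕ → ℝ) (i : ℕ) :
    gridInterp n a (i / n) = a i := by
  have hn' : (n : ℝ) ≠ 0 := Nat.cast_ne_zero.2 hn
  simp [gridInterp, mul_div_cancel₀ _ hn']

theorem gridInterp_mem_Icc (ha : Monotone a) (hx : 0 ≤ x) :
    gridInterp n a x ∈ Icc (a ⌊n * x⌋₊) (a (⌊n * x⌋₊ + 1)) := by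
  have h₀ : (⌊n * x⌋₊ : ℝ) ≤ n * x := Nat.floor_le (by positivity)
  have h₁ : n * x < ⌊n * x⌋₊ + 1 := Nat.lt_floor_add_one _
  have hstep := ha (Nat.le_succ ⌊n * x⌋₊)
  constructor <;> unfold gridInterp <;> nlinarith

theorem monotoneOn_gridInterp (ha : Monotone a) : MonotoneOn (gridInterp n a) (Ici 0) := by
  intro x hx y hy hxy
  have hnxy : (n : ℝ) * x ≤ n * y := mul_le_mul_of_nonneg_left hxy n.cast_nonneg
  rcases (Nat.floor_mono hnxy).eq_or_lt with hfloor | hfloor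
  · have hstep := ha (Nat.le_succ ⌊n * x⌋₊)
    unfold gridInterp
    rw [← hfloor]
    nlinarith
  · calc gridInterp n a x ≤ a (⌊n * x⌋₊ + 1) := (gridInterp_mem_Icc ha hx).2
      _ ≤ a ⌊n * y⌋₊ := ha hfloor
      _ ≤ gridInterp n a y := (gridInterp_mem_Icc ha hy).1

theorem gridInterp_eq_of_mem_Icc (hn : n ≠ 0) (a : ℕ → ℝ) {i : ℕ} (hxi : i / n ≤ x)
    (hxi' : x ≤ (i + 1) / n) :
    gridInterp n a x = gridInterp n a (i / n) +
      n * (x - i / n) * (gridInterp n a ((i + 1) / n) - gridInterp n a (i / n)) := by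
  have hn' : (0 : ℝ) < n := by exact_mod_cast Nat.pos_of_ne_zero hn
  have hsucc : gridInterp n a ((i + 1) / n) = a (i + 1) := by
    exact_mod_cast gridInterp_natCast_div hn a (i + 1)
  rw [gridInterp_natCast_div hn, hsucc]
  rcases hxi'.eq_or_lt with rfl | hlt
  · rw [hsucc]
    field_simp
    ring
  · have hfloor : ⌊n * x⌋₊ = i := by
      rw [Nat.floor_eq_iff (by nlinarith [div_nonneg i.cast_nonneg hn'.le])]
      constructor
      · rwa [div_le_iff₀ hn', mul_comm] at hxi
      · rwa [lt_div_iff₀ hn', mul_comm] at hlt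
    rw [gridInterp, hfloor, mul_sub (n : ℝ) x, mul_div_cancel₀ _ hn'.ne']

end gridInterp

noncomputable def gridApprox (f : ℝ → ℝ) (n : ℕ) : ℝ → ℝ :=
  gridInterp n (fun j => gridFloor n (f (gridPoint n j)))

section gridApprox

variable {f : ℝ → ℝ} {n : ℕ}

theorem monotone_gridFloor_comp_gridPoint (hmono : MonotoneOn f (Icc 0 1)) :
    Monotone (fun j => gridFloor n (f (gridPoint n j))) := fun _ _ h =>
  gridFloor_mono n (hmono (gridPoint_mem_Icc n _) (gridPoint_mem_Icc n _) (gridPoint_mono n h))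

theorem gridApprox_natCast_div (hn : n ≠ 0) {i : ℕ} (hi : i ≤ n) :
    gridApprox f n (i / n) = gridFloor n (f (i / n)) := by
  rw [gridApprox, gridInterp_natCast_div hn, gridPoint_of_le hi]

theorem gridApprox_mem_Wn (hmono : MonotoneOn f (Icc 0 1))
    (hrange : ∀ x ∈ Icc (0 : ℝ) 1, f x ∈ Icc (0 : ℝ) 1) (hf0 : f 0 = 0) (hf1 : f 1 = 1)
    (hn : n ≠ 0) : gridApprox f n ∈ Wn n := by
  have ha := monotone_gridFloor_comp_gridPoint (n := n) hmono
  refine ⟨?_, (monotoneOn_gridInterp ha).mono Icc_subset_Ici_self, ?_, ?_,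
    fun i hi => ⟨_, gridApprox_natCast_div hn hi⟩, fun i _ x => gridInterp_eq_of_mem_Icc hn _⟩
  · intro x hx
    obtain ⟨hl, hr⟩ := gridInterp_mem_Icc ha hx.1
    have hfj := hrange _ (gridPoint_mem_Icc n (⌊n * x⌋₊ + 1))
    exact ⟨(gridFloor_nonneg _ _).trans hl, hr.trans ((gridFloor_le hfj.1).trans hfj.2)⟩
  · simpa [hf0, gridFloor_zero] using gridApprox_natCast_div (f := f) hn n.zero_le
  · simpa [hn, hf1, gridFloor_one hn] using gridApprox_natCast_div (f := f) hn le_rfl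

theorem abs_sub_gridApprox_le (hmono : MonotoneOn f (Icc 0 1))
    (hrange : ∀ x ∈ Icc (0 : ℝ) 1, f x ∈ Icc (0 : ℝ) 1) {ε : ℝ}
    (hmod : ∀ x ∈ Icc (0 : ℝ) 1, ∀ y ∈ Icc (0 : ℝ) 1, |x - y| ≤ 1 / n → |f x - f y| ≤ ε)
    (hn : 0 < n) {x : ℝ} (hx : x ∈ Icc (0 : ℝ) 1) :
    |f x - gridApprox f n x| ≤ ε + 1 / n := by
  obtain ⟨hl, hr⟩ := gridInterp_mem_Icc (monotone_gridFloor_comp_gridPoint (n := n) hmono) hx.1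
  set i := ⌊n * x⌋₊
  have hp := gridPoint_mem_Icc n i
  have hq := gridPoint_mem_Icc n (i + 1)
  have hfp : f (gridPoint n i) ≤ f x := hmono hp hx (gridPoint_floor_le hx.1)
  have hfq : f x ≤ f (gridPoint n (i + 1)) := hmono hx hq (le_gridPoint_floor_succ hn hx.2)
  have hpq : f (gridPoint n (i + 1)) - f (gridPoint n i) ≤ ε := by
    refine (abs_le.1 (hmod _ hq _ hp ?_)).2
    rw [abs_of_nonneg (sub_nonneg.2 (gridPoint_mono n i.le_succ))]
    exact gridPoint_succ_sub_le n i
  have hlow := sub_inv_lt_gridFloor hn (f (gridPoint n i))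
  have hup := gridFloor_le (n := n) (hrange _ hq).1
  have hinv : (0 : ℝ) ≤ 1 / n := by positivity
  rw [gridApprox, abs_le]
  constructor <;> linarith

end gridApprox

theorem wn_approximates_given_modulus_general
    (f : ℝ → ℝ)
    (hmono : MonotoneOn f (Set.Icc (0:ℝ) 1))
    (hrange : ∀ x ∈ Set.Icc (0:ℝ) 1, f x ∈ Set.Icc (0:ℝ) 1)
    (hf0 : f 0 = 0) (hf1 : f 1 = 1)
    (n : ℕ) (hn : 1 ≤ n) (ε : ℝ)
    (hmod : ∀ x ∈ Set.Icc (0:ℝ) 1, ∀ y ∈ Set.Icc (0:ℝ) 1,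
      |x - y| ≤ 1 / n → |f x - f y| ≤ ε) :
    ∃ V ∈ Wn n, ∀ x ∈ Set.Icc (0:ℝ) 1, |f x - V x| ≤ ε + 2 / n := by
  refine ⟨gridApprox f n, gridApprox_mem_Wn hmono hrange hf0 hf1 (by omega), fun x hx => ?_⟩
  calc |f x - gridApprox f n x| ≤ ε + 1 / n := abs_sub_gridApprox_le hmono hrange hmod hn hx
    _ ≤ ε + 2 / n := by gcongr; norm_num

/-- A continuous increasing `f : [0,1] → [0,1]` with `f(0)=0`, `f(1)=1`
whose modulus of continuity at scale `1/n` is `ε` is approximated within `ε + 2/n` by some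
element of `W_n`. -/
theorem wn_approximates_given_modulus
    (f : ℝ → ℝ)
    (hcont : ContinuousOn f (Set.Icc (0:ℝ) 1))
    (hmono : MonotoneOn f (Set.Icc (0:ℝ) 1))
    (hrange : ∀ x ∈ Set.Icc (0:ℝ) 1, f x ∈ Set.Icc (0:ℝ) 1)
    (hf0 : f 0 = 0) (hf1 : f 1 = 1)
    (n : ℕ) (hn : 1 ≤ n) (ε : ℝ) (hε : 0 < ε)
    (hmod : ∀ x ∈ Set.Icc (0:ℝ) 1, ∀ y ∈ Set.Icc (0:ℝ) 1,
      |x - y| ≤ 1 / n → |f x - f y| ≤ ε) :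
    ∃ V ∈ Wn n, ∀ x ∈ Set.Icc (0:ℝ) 1, |f x - V x| ≤ ε + 2 / n :=
  wn_approximates_given_modulus_general f hmono hrange hf0 hf1 n hn ε hmod
end

section
/- Let Δ > 0 and let v_B : [0,1] → ℝ be an integrable value density with 0 ≤ v_B(x) ≤ Δ for all x and ∫_0^1 v_B = 1; set f(x) = ∫_0^x v_B(y) dy. Then for every integer n ≥ 1 there exists V ∈ W_n such that |V(x) − f(x)| ≤ (Δ + 2)/n for all x ∈ [0,1]. -/
open MeasureTheory

/-!
The primitive `F` of `v_B` is nondecreasing, vanishes at `0`, equals `1` at `1`, and is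
`Δ`-Lipschitz. Round each `F (i / n)` down to the grid `ℕ / n` and interpolate linearly between
the nodes `i / n`; this gives an element of `W_n`. On a cell `[i / n, (i + 1) / n]` the
interpolant lies between the rounded endpoint values, which are within `1 / n` of `F`, while `F`
itself moves by at most `Δ / n` across the cell, so the error is at most `(Δ + 1) / n`.
-/

open Set

theorem exists_nat_mem_Icc_add_one {n : ℕ} (hn : 0 < n) {y : ℝ} (hy : y ∈ Icc (0 : ℝ) n) :
    ∃ i < n, y ∈ Icc (i : ℝ) (i + 1) := by
  refine ⟨min ⌊y⌋₊ (n - 1), by omega, ?_, ?_⟩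
  · exact (Nat.cast_le.2 (min_le_left _ _)).trans (Nat.floor_le hy.1)
  · rcases le_total ⌊y⌋₊ (n - 1) with h | h
    · rw [min_eq_left h]; exact (Nat.lt_floor_add_one y).le
    · rw [min_eq_right h, Nat.cast_sub hn, Nat.cast_one, sub_add_cancel]; exact hy.2

/-- The piecewise linear interpolation of `c 0, …, c n` at the integer nodes; the `min` puts
`y = n` into the last cell `[n - 1, n]`. -/
noncomputable def linearInterp (n : ℕ) (c : ℕ → ℝ) (y : ℝ) : ℝ :=
  let i := min ⌊y⌋₊ (n - 1)
  c i + (y - i) * (c (i + 1) - c i)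

namespace linearInterp

variable {n : ℕ} {c : ℕ → ℝ}

theorem eq_of_mem_cell {i : ℕ} (hi : i < n) {y : ℝ} (hy : y ∈ Icc (i : ℝ) (i + 1)) :
    linearInterp n c y = c i + (y - i) * (c (i + 1) - c i) := by
  rcases hy.2.lt_or_eq with hlt | rfl
  · have hfl : ⌊y⌋₊ = i := (Nat.floor_eq_iff ((Nat.cast_nonneg i).trans hy.1)).2 ⟨hy.1, hlt⟩
    simp only [linearInterp, hfl, min_eq_left (Nat.le_sub_one_of_lt hi)]
  · have hfl : ⌊(i : ℝ) + 1⌋₊ = i + 1 := by exact_mod_cast Nat.floor_natCast (i + 1)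
    rcases lt_or_eq_of_le (Nat.le_sub_one_of_lt hi) with hlt | heq
    · simp only [linearInterp, hfl, min_eq_left (Nat.succ_le_of_lt hlt)]
      push_cast; ring
    · simp only [linearInterp, hfl, ← heq, min_eq_right (Nat.le_succ i)]

theorem natCast (hn : 0 < n) {j : ℕ} (hj : j ≤ n) : linearInterp n c j = c j := by
  rcases hj.lt_or_eq with hlt | rfl
  · rw [eq_of_mem_cell hlt ⟨le_rfl, by linarith⟩]; ring
  · have hcell : (j : ℝ) ∈ Icc ((j - 1 : ℕ) : ℝ) ((j - 1 : ℕ) + 1) := by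
      rw [Nat.cast_sub hn, Nat.cast_one]; constructor <;> linarith
    rw [eq_of_mem_cell (by omega) hcell, Nat.sub_add_cancel hn, Nat.cast_sub hn]; ring

variable (hc : MonotoneOn c (Iic n))
include hc

theorem mem_Icc_of_mem_cell {i : ℕ} (hi : i < n) {y : ℝ} (hy : y ∈ Icc (i : ℝ) (i + 1)) :
    linearInterp n c y ∈ Icc (c i) (c (i + 1)) := by
  have hstep : c i ≤ c (i + 1) := hc (mem_Iic.2 hi.le) (mem_Iic.2 hi) i.le_succ
  have ht : y - i ∈ Icc (0 : ℝ) 1 := ⟨by linarith [hy.1], by linarith [hy.2]⟩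
  rw [eq_of_mem_cell hi hy]
  constructor <;> nlinarith [ht.1, ht.2]

theorem monotoneOn (hn : 0 < n) : MonotoneOn (linearInterp n c) (Icc 0 n) := by
  intro y hy y' hy' hyy'
  obtain ⟨i, hi, hyi⟩ := exists_nat_mem_Icc_add_one hn hy
  obtain ⟨i', hi', hyi'⟩ := exists_nat_mem_Icc_add_one hn hy'
  rcases lt_trichotomy i i' with hlt | rfl | hgt
  · calc linearInterp n c y ≤ c (i + 1) := (mem_Icc_of_mem_cell hc hi hyi).2
      _ ≤ c i' := hc (mem_Iic.2 hi) (mem_Iic.2 hi'.le) hlt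
      _ ≤ linearInterp n c y' := (mem_Icc_of_mem_cell hc hi' hyi').1
  · have hstep : c i ≤ c (i + 1) := hc (mem_Iic.2 hi.le) (mem_Iic.2 hi) i.le_succ
    rw [eq_of_mem_cell hi hyi, eq_of_mem_cell hi hyi']
    gcongr
  · -- cells `i' < i` can only meet in the point `y = y'`
    have hle : (i' : ℝ) + 1 ≤ i := by exact_mod_cast hgt
    rw [le_antisymm hyy' (by linarith [hyi.1, hyi'.2])]

end linearInterp

theorem linearInterp_mem_Wn {n : ℕ} {c : ℕ → ℝ} (hn : 0 < n) (hc : MonotoneOn c (Iic n))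
    (h0 : c 0 = 0) (h1 : c n = 1) (hgrid : ∀ i ≤ n, ∃ k : ℕ, c i = k / n) :
    (fun x => linearInterp n c (n * x)) ∈ Wn n := by
  have hnR : (n : ℝ) ≠ 0 := by positivity
  have hgridVal : ∀ i ≤ n, linearInterp n c (n * (i / n)) = c i := fun i hi => by
    rw [mul_div_cancel₀ _ hnR, linearInterp.natCast hn hi]
  have hmono : MonotoneOn (fun x => linearInterp n c (n * x)) (Icc 0 1) := by
    refine (linearInterp.monotoneOn hc hn).comp (fun x hx y hy hxy => by gcongr) ?_
    intro x hx
    exact ⟨by nlinarith [hx.1], by nlinarith [hx.2]⟩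
  have hV0 : linearInterp n c (n * 0) = 0 := by
    simpa [h0] using hgridVal 0 (Nat.zero_le n)
  have hV1 : linearInterp n c (n * 1) = 1 := by
    simpa [hnR, h1] using hgridVal n le_rfl
  refine ⟨fun x hx => ?_, hmono, by simpa using hV0, by simpa using hV1, ?_, ?_⟩
  · have hlo := hmono ⟨le_rfl, zero_le_one⟩ hx hx.1
    have hhi := hmono hx ⟨zero_le_one, le_rfl⟩ hx.2
    simp only [hV0, hV1] at hlo hhi
    exact ⟨hlo, hhi⟩
  · intro i hi
    simpa only [hgridVal i hi] using hgrid i hi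
  · intro i hi x hx1 hx2
    have hcell : (n : ℝ) * x ∈ Icc (i : ℝ) (i + 1) := by
      constructor
      · rwa [div_le_iff₀' (by positivity)] at hx1
      · rwa [le_div_iff₀' (by positivity)] at hx2
    have hsucc : linearInterp n c (n * ((i + 1) / n)) = c (i + 1) := by
      exact_mod_cast hgridVal (i + 1) hi
    dsimp only
    rw [hgridVal i hi.le, hsucc, linearInterp.eq_of_mem_cell hi hcell, mul_sub (n : ℝ) x,
      mul_div_cancel₀ _ hnR]

section FloorApprox

variable {n : ℕ} {a : ℝ}

theorem natFloor_mul_div_le (ha : 0 ≤ a) : (⌊n * a⌋₊ : ℝ) / n ≤ a := by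
  rcases n.eq_zero_or_pos with rfl | hn
  · simpa using ha
  · rw [div_le_iff₀' (by positivity)]
    exact Nat.floor_le (by positivity)

theorem sub_one_div_lt_natFloor_mul_div (hn : 0 < n) : a - 1 / n < (⌊n * a⌋₊ : ℝ) / n := by
  have hnR : (0 : ℝ) < n := by positivity
  rw [lt_div_iff₀ hnR, sub_mul, one_div_mul_cancel hnR.ne', mul_comm]
  linarith [Nat.lt_floor_add_one ((n : ℝ) * a)]

end FloorApprox

theorem exists_mem_Wn_abs_sub_le {f : ℝ → ℝ} {L : ℝ} {n : ℕ} (hn : 0 < n)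
    (hf : MonotoneOn f (Icc 0 1)) (hf0 : f 0 = 0) (hf1 : f 1 = 1)
    (hL : ∀ s ∈ Icc (0 : ℝ) 1, ∀ t ∈ Icc (0 : ℝ) 1, s ≤ t → f t - f s ≤ L * (t - s)) :
    ∃ V ∈ Wn n, ∀ x ∈ Icc (0 : ℝ) 1, |V x - f x| ≤ (L + 1) / n := by
  have hnR : (0 : ℝ) < n := by positivity
  have hnode : ∀ i ≤ n, (i / n : ℝ) ∈ Icc 0 1 := fun i hi =>
    ⟨by positivity, div_le_one_of_le₀ (by exact_mod_cast hi) hnR.le⟩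
  have hfnn : ∀ i ≤ n, 0 ≤ f (i / n) := fun i hi =>
    hf0 ▸ hf ⟨le_rfl, zero_le_one⟩ (hnode i hi) (hnode i hi).1
  set c : ℕ → ℝ := fun i => ⌊n * f (i / n)⌋₊ / n with hc
  have hcmono : MonotoneOn c (Iic n) := fun i hi j hj hij => by
    have hfij : f (i / n) ≤ f (j / n) := hf (hnode i hi) (hnode j hj) (by gcongr)
    simp only [hc]
    gcongr
  have hc0 : c 0 = 0 := by simp [hc, hf0]
  have hc1 : c n = 1 := by simp [hc, hnR.ne', hf1]
  refine ⟨_, linearInterp_mem_Wn hn hcmono hc0 hc1 fun i _ => ⟨_, rfl⟩, fun x hx => ?_⟩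
  obtain ⟨i, hi, hcell⟩ := exists_nat_mem_Icc_add_one hn
    (⟨by nlinarith [hx.1], by nlinarith [hx.2]⟩ : (n : ℝ) * x ∈ Icc (0 : ℝ) n)
  have hVx := linearInterp.mem_Icc_of_mem_cell hcmono hi hcell
  have hxi : (i / n : ℝ) ≤ x := by rw [div_le_iff₀' hnR]; exact hcell.1
  have hxi' : x ≤ ((i + 1 : ℕ) / n : ℝ) := by push_cast; rw [le_div_iff₀' hnR]; exact hcell.2
  have hfx : f (i / n) ≤ f x := hf (hnode i hi.le) hx hxi
  have hfx' : f x ≤ f ((i + 1 : ℕ) / n) := hf hx (hnode (i + 1) hi) hxi'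
  have hjump : f ((i + 1 : ℕ) / n) - f (i / n) ≤ L / n := by
    have h := hL _ (hnode i hi.le) _ (hnode (i + 1) hi) (hxi.trans hxi')
    rw [Nat.cast_succ] at h ⊢
    rwa [← sub_div, add_sub_cancel_left, mul_one_div] at h
  have hci := sub_one_div_lt_natFloor_mul_div (a := f (i / n)) hn
  have hci' := natFloor_mul_div_le (n := n) (hfnn (i + 1) hi)
  rw [abs_le, add_div]
  constructor
  · linarith [hVx.1]
  · have hinv : (0 : ℝ) ≤ 1 / n := by positivity
    linarith [hVx.2]

section Primitive

variable {g : ℝ → ℝ} {a b : ℝ} (hg : IntervalIntegrable g volume a b)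
include hg

theorem integral_sub_integral_of_mem_Icc {s t : ℝ} (hs : s ∈ Icc a b) (ht : t ∈ Icc a b) :
    (∫ y in a..t, g y) - ∫ y in a..s, g y = ∫ y in s..t, g y :=
  intervalIntegral.integral_interval_sub_left
    (hg.mono_set (uIcc_subset_uIcc_left (Icc_subset_uIcc ht)))
    (hg.mono_set (uIcc_subset_uIcc_left (Icc_subset_uIcc hs)))

theorem monotoneOn_integral_of_nonneg (hg0 : ∀ x ∈ Icc a b, 0 ≤ g x) :
    MonotoneOn (fun x => ∫ y in a..x, g y) (Icc a b) := fun s hs t ht hst => by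
  rw [← sub_nonneg, integral_sub_integral_of_mem_Icc hg hs ht]
  exact intervalIntegral.integral_nonneg hst fun x hx => hg0 x ⟨hs.1.trans hx.1, hx.2.trans ht.2⟩

theorem integral_sub_integral_le {M : ℝ} (hgM : ∀ x ∈ Icc a b, g x ≤ M) {s t : ℝ}
    (hs : s ∈ Icc a b) (ht : t ∈ Icc a b) (hst : s ≤ t) :
    (∫ y in a..t, g y) - ∫ y in a..s, g y ≤ M * (t - s) := by
  have hsub : Icc s t ⊆ Icc a b := Icc_subset_Icc hs.1 ht.2
  rw [integral_sub_integral_of_mem_Icc hg hs ht]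
  calc (∫ y in s..t, g y) ≤ ∫ _ in s..t, M :=
        intervalIntegral.integral_mono_on hst
          (hg.mono_set (by rwa [uIcc_of_le hst, uIcc_of_le (hs.1.trans hs.2)]))
          intervalIntegrable_const fun x hx => hgM x (hsub hx)
    _ = M * (t - s) := by rw [intervalIntegral.integral_const, smul_eq_mul, mul_comm]

end Primitive

theorem wn_approximates_bounded_density_general
    (Δ : ℝ) (vB : ℝ → ℝ)
    (hint : IntervalIntegrable vB volume 0 1)
    (hbd : ∀ x ∈ Set.Icc (0:ℝ) 1, 0 ≤ vB x ∧ vB x ≤ Δ)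
    (hnorm : (∫ y in (0:ℝ)..1, vB y) = 1)
    (n : ℕ) (hn : 1 ≤ n) :
    ∃ V ∈ Wn n, ∀ x ∈ Set.Icc (0:ℝ) 1,
      |V x - ∫ y in (0:ℝ)..x, vB y| ≤ (Δ + 2) / n := by
  obtain ⟨V, hV, hVf⟩ := exists_mem_Wn_abs_sub_le hn
    (monotoneOn_integral_of_nonneg hint fun x hx => (hbd x hx).1)
    intervalIntegral.integral_same hnorm
    fun s hs t ht => integral_sub_integral_le hint (fun x hx => (hbd x hx).2) hs ht
  refine ⟨V, hV, fun x hx => (hVf x hx).trans ?_⟩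
  gcongr
  norm_num

/-- If Bob's value density is bounded above by `Δ`, then for every `n ≥ 1`
its cumulative valuation is approximated within `(Δ+2)/n` by some element of `W_n`. -/
theorem wn_approximates_bounded_density
    (Δ : ℝ) (hΔ : 0 < Δ) (vB : ℝ → ℝ)
    (hint : IntervalIntegrable vB volume 0 1)
    (hbd : ∀ x ∈ Set.Icc (0:ℝ) 1, 0 ≤ vB x ∧ vB x ≤ Δ)
    (hnorm : (∫ y in (0:ℝ)..1, vB y) = 1)
    (n : ℕ) (hn : 1 ≤ n) :
    ∃ V ∈ Wn n, ∀ x ∈ Set.Icc (0:ℝ) 1,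
      |V x - ∫ y in (0:ℝ)..x, vB y| ≤ (Δ + 2) / n :=
  wn_approximates_bounded_density_general Δ vB hint hbd hnorm n hn
end
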